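/- arXiv:2506.15078 — 2 statements merged into one kernel-verified Lean document; each statement's English description precedes it below -/
import Mathlib

section
/- Suppose the codebook distribution P_B attains vanishing quantization error asymptotically over the bounded open support Ω of P_A. Then every point of supp(P_A) lies in the closure of supp(P_B); in particular, the closure of supp(P_A) is contained in the closure of supp(P_B). -/
open MeasureTheory ProbabilityTheory Metric Filter

/-- Topological support of a measure. -/
def msupport {E : Type*} [TopologicalSpace E] [MeasurableSpace E] (μ : Measure E) : Set E :=
  {x | ∀ U : Set E, IsOpen U → x ∈ U → μ U ≠ 0}

/-- Quantization error of a feature set w.r.t. a codebook. -/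
noncomputable def quantErr {E : Type*} [NormedAddCommGroup E] {K N : ℕ}
    (e : Fin K → E) (z : Fin N → E) : ℝ :=
  (1 / (N : ℝ)) * ∑ i, ⨅ k, ‖z i - e k‖ ^ 2

open scoped Classical in
/-- Index of the nearest code vector, ties broken by least index. -/
noncomputable def nearestIdx {E : Type*} [NormedAddCommGroup E] {K : ℕ} (hK : 0 < K)
    (e : Fin K → E) (x : E) : Fin K :=
  if h : ∃ k, ∀ j, ‖x - e k‖ ≤ ‖x - e j‖ then
    (Finset.univ.filter fun k => ∀ j, ‖x - e k‖ ≤ ‖x - e j‖).min'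
      (by obtain ⟨k, hk⟩ := h; exact ⟨k, by simpa using hk⟩)
  else ⟨0, hK⟩

open scoped Classical in
/-- Codebook utilization rate: fraction of code vectors that are nearest to some feature. -/
noncomputable def utilization {E : Type*} [NormedAddCommGroup E] {K N : ℕ} (hK : 0 < K)
    (e : Fin K → E) (z : Fin N → E) : ℝ :=
  ((Finset.univ.filter fun k => ∃ i, nearestIdx hK e (z i) = k).card : ℝ) / K

theorem stmt2 {d : ℕ} (PA PB : Measure (EuclideanSpace ℝ (Fin d)))
    [IsProbabilityMeasure PA] [IsProbabilityMeasure PB]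
    (Ω : Set (EuclideanSpace ℝ (Fin d)))
    (hΩ : msupport PA = Ω) (hopen : IsOpen Ω) (hbdd : Bornology.IsBounded Ω)
    (hvanish : ∀ ε > 0, Tendsto
      (fun K => (Measure.pi fun _ : Fin K => PB)
        {e | ε < ⨆ (N : ℕ) (z : Fin N → EuclideanSpace ℝ (Fin d)) (_ : ∀ i, z i ∈ Ω),
          quantErr e z})
      atTop (nhds 0)) :
    msupport PA ⊆ closure (msupport PB) ∧
      closure (msupport PA) ⊆ closure (msupport PB) := by
  have key : msupport PA ⊆ closure (msupport PB) := by
    intro x hx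
    by_contra hxc
    have hxΩ : x ∈ Ω := hΩ ▸ hx
    -- find a ball around x disjoint from msupport PB
    obtain ⟨r, hr, hball⟩ := Metric.isOpen_iff.1 isClosed_closure.isOpen_compl x hxc
    have hsub : ball x r ⊆ (msupport PB)ᶜ :=
      hball.trans (Set.compl_subset_compl.2 subset_closure)
    -- PB (ball x r) = 0
    have hnull : PB (ball x r) = 0 := by
      have hch : ∀ y : ball x r, ∃ U, IsOpen U ∧ (y : EuclideanSpace ℝ (Fin d)) ∈ U ∧
          PB U = 0 := by
        rintro ⟨y, hy⟩
        have h := hsub hy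
        simp only [msupport, Set.mem_compl_iff, Set.mem_setOf_eq] at h
        push_neg at h
        obtain ⟨U, hU1, hU2, hU3⟩ := h
        exact ⟨U, hU1, hU2, hU3⟩
      choose U hUo hUm hUn using hch
      obtain ⟨t, htc, htU⟩ := TopologicalSpace.isOpen_iUnion_countable U hUo
      have hcover : ball x r ⊆ ⋃ i ∈ t, U i := by
        rw [htU]; intro y hy; exact Set.mem_iUnion.2 ⟨⟨y, hy⟩, hUm _⟩
      exact measure_mono_null hcover ((measure_biUnion_null_iff htc).2 fun i _ => hUn i)
    have hcompl : PB (ball x r)ᶜ = 1 := by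
      rw [measure_compl measurableSet_ball (measure_ne_top _ _), hnull, measure_univ, tsub_zero]
    -- bound on Ω
    obtain ⟨C₀, hC₀⟩ := hbdd.exists_norm_le
    set C : ℝ := max C₀ 0 with hCdef
    have hC : ∀ y ∈ Ω, ‖y‖ ≤ C := fun y hy => (hC₀ y hy).trans (le_max_left _ _)
    have hC0 : 0 ≤ C := le_max_right _ _
    -- the contradiction via hvanish
    set ε : ℝ := r ^ 2 / 2 with hεdef
    have hε : 0 < ε := by positivity
    have hev := (tendsto_order.1 (hvanish ε hε)).2 1 (by norm_num)
    obtain ⟨K₀, hK₀⟩ := Filter.eventually_atTop.1 hev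
    set K : ℕ := max K₀ 1 with hKdef
    have hK : 0 < K := lt_of_lt_of_le one_pos (le_max_right _ _)
    have hlt := hK₀ K (le_max_left _ _)
    -- the event that all code vectors avoid the ball
    set A : Set (Fin K → EuclideanSpace ℝ (Fin d)) :=
      Set.pi Set.univ (fun _ => (ball x r)ᶜ) with hAdef
    have hApi : (Measure.pi fun _ : Fin K => PB) A = 1 := by
      rw [hAdef, Measure.pi_pi]
      simp [hcompl]
    have hAsub : A ⊆ {e | ε < ⨆ (N : ℕ) (z : Fin N → EuclideanSpace ℝ (Fin d))
        (_ : ∀ i, z i ∈ Ω), quantErr e z} := by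
      intro e he
      have heK : ∀ k, r ≤ ‖x - e k‖ := by
        intro k
        have h1 : e k ∈ (ball x r)ᶜ := he k (Set.mem_univ k)
        have h2 : ¬ dist (e k) x < r := by simpa [Metric.mem_ball] using h1
        rw [norm_sub_rev, ← dist_eq_norm]
        exact not_lt.1 (by simpa [dist_comm] using h2)
      haveI : Nonempty (Fin K) := ⟨⟨0, hK⟩⟩
      set M : ℝ := (C + ‖e ⟨0, hK⟩‖) ^ 2 with hMdef
      have hM0 : 0 ≤ M := by positivity
      -- quantErr bound
      have hqb : ∀ (N : ℕ) (z : Fin N → EuclideanSpace ℝ (Fin d)),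
          (∀ i, z i ∈ Ω) → quantErr e z ≤ M := by
        intro N z hz
        rcases Nat.eq_zero_or_pos N with hN | hN
        · subst hN; simp [quantErr, hM0]
        · have hterm : ∀ i : Fin N, (⨅ k, ‖z i - e k‖ ^ 2) ≤ M := by
            intro i
            have hbdd' : BddBelow (Set.range fun k => ‖z i - e k‖ ^ 2) := by
              refine ⟨0, ?_⟩; rintro _ ⟨k, rfl⟩; positivity
            refine (ciInf_le hbdd' ⟨0, hK⟩).trans ?_
            have h1 : ‖z i - e ⟨0, hK⟩‖ ≤ C + ‖e ⟨0, hK⟩‖ :=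
              (norm_sub_le _ _).trans (add_le_add (hC _ (hz i)) le_rfl)
            exact pow_le_pow_left₀ (norm_nonneg _) h1 2
          have hsum : (∑ i, ⨅ k, ‖z i - e k‖ ^ 2) ≤ N * M := by
            calc (∑ i : Fin N, ⨅ k, ‖z i - e k‖ ^ 2)
                ≤ ∑ _i : Fin N, M := Finset.sum_le_sum fun i _ => hterm i
              _ = N * M := by simp [mul_comm]
          have hNpos : (0:ℝ) < N := by exact_mod_cast hN
          calc quantErr e z = (1 / (N : ℝ)) * ∑ i, ⨅ k, ‖z i - e k‖ ^ 2 := rfl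
            _ ≤ (1 / (N : ℝ)) * (N * M) := by
                apply mul_le_mul_of_nonneg_left hsum (by positivity)
            _ = M := by field_simp
      -- level-wise bounds
      have hg : ∀ (N : ℕ) (z : Fin N → EuclideanSpace ℝ (Fin d)),
          (⨆ (_ : ∀ i, z i ∈ Ω), quantErr e z) ≤ M := by
        intro N z
        by_cases h : ∀ i, z i ∈ Ω
        · rw [ciSup_pos h]; exact hqb N z h
        · haveI : IsEmpty (PLift (∀ i, z i ∈ Ω)) := ⟨fun p => h p.down⟩
          rw [iSup, Set.range_eq_empty_iff.2 (by
            constructor; intro p; exact h p), Real.sSup_empty]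
          exact hM0
      have hf : ∀ N : ℕ, (⨆ (z : Fin N → EuclideanSpace ℝ (Fin d))
          (_ : ∀ i, z i ∈ Ω), quantErr e z) ≤ M :=
        fun N => Real.iSup_le (hg N) hM0
      -- the witness
      have hwit : r ^ 2 ≤ quantErr e (fun _ : Fin 1 => x) := by
        have h1 : quantErr e (fun _ : Fin 1 => x) = ⨅ k, ‖x - e k‖ ^ 2 := by
          simp [quantErr]
        rw [h1]
        exact le_ciInf fun k => pow_le_pow_left₀ hr.le (heK k) 2
      have hstep1 : quantErr e (fun _ : Fin 1 => x)
          ≤ ⨆ (_ : ∀ i : Fin 1, (fun _ : Fin 1 => x) i ∈ Ω),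
            quantErr e (fun _ : Fin 1 => x) :=
        le_of_eq (ciSup_pos (f := fun _ => quantErr e (fun _ : Fin 1 => x)) (fun _ => hxΩ)).symm
      have hstep2 : (⨆ (_ : ∀ i : Fin 1, (fun _ : Fin 1 => x) i ∈ Ω),
            quantErr e (fun _ : Fin 1 => x))
          ≤ ⨆ (z : Fin 1 → EuclideanSpace ℝ (Fin d)) (_ : ∀ i, z i ∈ Ω), quantErr e z := by
        apply le_ciSup (f := fun z : Fin 1 → EuclideanSpace ℝ (Fin d) =>
          ⨆ (_ : ∀ i, z i ∈ Ω), quantErr e z)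
        exact ⟨M, by rintro _ ⟨z, rfl⟩; exact hg 1 z⟩
      have hstep3 : (⨆ (z : Fin 1 → EuclideanSpace ℝ (Fin d))
            (_ : ∀ i, z i ∈ Ω), quantErr e z)
          ≤ ⨆ (N : ℕ) (z : Fin N → EuclideanSpace ℝ (Fin d)) (_ : ∀ i, z i ∈ Ω),
            quantErr e z := by
        apply le_ciSup (f := fun N : ℕ => ⨆ (z : Fin N → EuclideanSpace ℝ (Fin d))
          (_ : ∀ i, z i ∈ Ω), quantErr e z)
        exact ⟨M, by rintro _ ⟨N, rfl⟩; exact hf N⟩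
      have : ε < r ^ 2 := half_lt_self (by positivity)
      exact Set.mem_setOf_eq ▸ lt_of_lt_of_le this
        (hwit.trans (hstep1.trans (hstep2.trans hstep3)))
    have hge : (1 : ENNReal) ≤ (Measure.pi fun _ : Fin K => PB)
        {e | ε < ⨆ (N : ℕ) (z : Fin N → EuclideanSpace ℝ (Fin d))
          (_ : ∀ i, z i ∈ Ω), quantErr e z} := by
      rw [← hApi]; exact measure_mono hAsub
    exact absurd hlt (not_lt.2 hge)
  exact ⟨key, closure_minimal key isClosed_closure⟩
end

section
/- If there exists an open region R contained in supp(P_B) but disjoint from the closure of supp(P_A), with P_B(R) > 0 and with distance at least ε₀ > 0 from supp(P_A), and if with positive probability K₀ i.i.d. code vectors from P_B all lie in supp(P_A) and are ε₀-dense in supp(P_A), then with positive probability a codebook of size K₀+1 drawn i.i.d. from P_B has utilization rate at most K₀/(K₀+1) for every feature set, so P_B does not attain full utilization asymptotically. -/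
open MeasureTheory ProbabilityTheory Metric Filter

theorem stmt3 {d : ℕ} (PA PB : Measure (EuclideanSpace ℝ (Fin d)))
    [IsProbabilityMeasure PA] [IsProbabilityMeasure PB]
    (ε₀ : ℝ) (hε₀ : 0 < ε₀) (K₀ : ℕ) (hK₀ : 0 < K₀)
    (R : Set (EuclideanSpace ℝ (Fin d))) (hRopen : IsOpen R)
    (hRB : R ⊆ msupport PB) (hRdisj : R ∩ closure (msupport PA) = ∅)
    (hRpos : 0 < PB R)
    (hRfar : ∀ a ∈ msupport PA, ∀ b ∈ R, ε₀ ≤ ‖a - b‖)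
    (hdense : 0 < (Measure.pi fun _ : Fin K₀ => PB)
      {e | (∀ k, e k ∈ msupport PA) ∧ ∀ z ∈ msupport PA, ∃ k, ‖z - e k‖ < ε₀}) :
    0 < (Measure.pi fun _ : Fin (K₀ + 1) => PB)
      {e | ∀ (N : ℕ) (z : Fin N → EuclideanSpace ℝ (Fin d)),
        (∀ i, z i ∈ msupport PA) →
        utilization (Nat.succ_pos K₀) e z ≤ (K₀ : ℝ) / (K₀ + 1)} := by
  classical
  set S : Set (Fin K₀ → EuclideanSpace ℝ (Fin d)) :=
    {e | (∀ k, e k ∈ msupport PA) ∧ ∀ z ∈ msupport PA, ∃ k, ‖z - e k‖ < ε₀} with hS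
  set T : Set (Fin (K₀ + 1) → EuclideanSpace ℝ (Fin d)) :=
    {e | (fun k : Fin K₀ => e k.castSucc) ∈ S ∧ e (Fin.last K₀) ∈ R} with hTdef
  have hprod : 0 < (PB.prod (Measure.pi fun _ : Fin K₀ => PB)) (R ×ˢ S) := by
    rw [pos_iff_ne_zero]
    intro h0
    have hae : ∀ᵐ x ∂PB, (Measure.pi fun _ : Fin K₀ => PB) (Prod.mk x ⁻¹' (R ×ˢ S)) = 0 :=
        Measure.measure_ae_null_of_prod_null h0
    rw [ae_iff] at hae
    have hsub : R ⊆ {x | ¬ (Measure.pi fun _ : Fin K₀ => PB) (Prod.mk x ⁻¹' (R ×ˢ S)) = 0} := by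
      intro x hx h
      rw [Set.mk_preimage_prod_right hx] at h
      exact hdense.ne' h
    exact absurd (le_trans (measure_mono hsub) hae.le) hRpos.not_ge
  have hT : 0 < (Measure.pi fun _ : Fin (K₀ + 1) => PB) T := by
    have hmp := measurePreserving_piFinSuccAbove (fun _ : Fin (K₀ + 1) => PB) (Fin.last K₀)
    have hemb := (MeasurableEquiv.piFinSuccAbove (fun _ : Fin (K₀ + 1) => EuclideanSpace ℝ (Fin d))
      (Fin.last K₀)).measurableEmbedding
    have hpre := hmp.measure_preimage_emb hemb (R ×ˢ S)
    have hset : (MeasurableEquiv.piFinSuccAbove (fun _ : Fin (K₀ + 1) => EuclideanSpace ℝ (Fin d)) (Fin.last K₀)) ⁻¹'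
        (R ×ˢ S) = T := by
      ext e
      simp [hTdef, Fin.insertNthEquiv, Fin.removeNth, Fin.succAbove_last, and_comm]
      exact fun _ => Iff.rfl
    rw [hset] at hpre
    rw [hpre]
    exact hprod
  refine lt_of_lt_of_le hT (measure_mono ?_)
  rintro e ⟨⟨hesupp, hedense⟩, heR⟩ N z hz
  -- the last code vector is never nearest
  have hlast : ∀ x ∈ msupport PA, nearestIdx (Nat.succ_pos K₀) e x ≠ Fin.last K₀ := by
    intro x hx
    obtain ⟨k₀, hk₀⟩ := hedense x hx
    have hfar : ε₀ ≤ ‖x - e (Fin.last K₀)‖ := hRfar x hx _ heR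
    have hex : ∃ k, ∀ j, ‖x - e k‖ ≤ ‖x - e j‖ := by
      obtain ⟨k, -, hk⟩ := Finset.exists_min_image Finset.univ (fun k => ‖x - e k‖)
        ⟨Fin.last K₀, Finset.mem_univ _⟩
      exact ⟨k, fun j => hk j (Finset.mem_univ j)⟩
    rw [nearestIdx, dif_pos hex]
    intro hcontra
    have hmem := Finset.min'_mem
      (Finset.univ.filter fun k => ∀ j, ‖x - e k‖ ≤ ‖x - e j‖)
      (by obtain ⟨k, hk⟩ := hex; exact ⟨k, by simpa using hk⟩)
    rw [hcontra, Finset.mem_filter] at hmem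
    have := hmem.2 k₀.castSucc
    have : ‖x - e (Fin.last K₀)‖ < ε₀ := lt_of_le_of_lt this hk₀
    linarith
  have hsub : (Finset.univ.filter fun k =>
      ∃ i, nearestIdx (Nat.succ_pos K₀) e (z i) = k) ⊆ Finset.univ.erase (Fin.last K₀) := by
    intro k hk
    rw [Finset.mem_filter] at hk
    obtain ⟨-, i, hi⟩ := hk
    refine Finset.mem_erase.2 ⟨?_, Finset.mem_univ _⟩
    rintro rfl
    exact hlast (z i) (hz i) hi
  have hcard : ((Finset.univ.filter fun k =>
      ∃ i, nearestIdx (Nat.succ_pos K₀) e (z i) = k).card : ℝ) ≤ (K₀ : ℝ) := by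
    have := Finset.card_le_card hsub
    rw [Finset.card_erase_of_mem (Finset.mem_univ _), Finset.card_univ, Fintype.card_fin] at this
    exact_mod_cast this
  rw [utilization]
  rw [div_le_div_iff₀ (by positivity) (by positivity)]
  push_cast
  nlinarith [hcard]
end
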